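/- arXiv:2603.13692 — 3 statements merged into one kernel-verified Lean document; each statement's English description precedes it below -/
import Mathlib

section
/- Let R be a commutative ring and let A →^f B →^g C →^h D be a sequence of R-modules and R-linear maps that is exact at B and at C. Let K be a submodule of B, let π₁ : B → B/K be the canonical surjection, set B₂ = B/K, let C₂ = C/g(K) with canonical surjection π₂ : C → C₂, and let g₂ : B₂ → C₂ be the map induced by g (so that g₂ ∘ π₁ = π₂ ∘ g). Set f₂ = π₁ ∘ f : A → B₂, and let h₂ : C₂ → D be the unique map with h₂ ∘ π₂ = h (which exists since h(g(K)) = 0). Then the sequence A →^{f₂} B₂ →^{g₂} C₂ →^{h₂} D is exact at B₂ and at C₂. -/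
/-! The induced maps are forced to be `mapQ g` and `liftQ h`, and exactness becomes an identity
of submodules: `ker g₂ = π₁ (g⁻¹ (g K)) = π₁ (K ⊔ ker g) = π₁ (range f)` since `π₁ K = 0`, and
`ker h₂ = π₂ (ker h) = π₂ (range g) = range g₂`. -/

namespace Submodule

variable {R A M N P : Type*} [Ring R] [AddCommGroup A] [Module R A] [AddCommGroup M] [Module R M]
  [AddCommGroup N] [Module R N] [AddCommGroup P] [Module R P]

theorem exact_mkQ_comp_mapQ_map {f : A →ₗ[R] M} {g : M →ₗ[R] N} (hfg : Function.Exact f g)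
    (p : Submodule R M) :
    Function.Exact (p.mkQ ∘ₗ f) (p.mapQ (p.map g) g (p.le_comap_map g)) := by
  rw [LinearMap.exact_iff, ker_mapQ, comap_map_eq, hfg.linearMap_ker_eq, map_sup, mkQ_map_self,
    bot_sup_eq, LinearMap.range_comp]

theorem exact_mapQ_liftQ {g : M →ₗ[R] N} {h : N →ₗ[R] P} (hgh : Function.Exact g h)
    (p : Submodule R M) (q : Submodule R N) (hpq : p ≤ q.comap g) (hq : q ≤ LinearMap.ker h) :
    Function.Exact (p.mapQ q g hpq) (q.liftQ h hq) := by
  rw [LinearMap.exact_iff, ker_liftQ, range_mapQ, hgh.linearMap_ker_eq]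

end Submodule

/-- Proposition 2.1(b) (Stability of Exactness, pushout case):
pushing out an exact sequence `A → B → C → D` along the quotient map
`π₁ : B → B/K` yields an exact sequence `A → B/K → C/g(K) → D`. -/
theorem stability_of_exactness_pushout
    {R : Type*} [CommRing R]
    {A B C D : Type*}
    [AddCommGroup A] [Module R A] [AddCommGroup B] [Module R B]
    [AddCommGroup C] [Module R C] [AddCommGroup D] [Module R D]
    (f : A →ₗ[R] B) (g : B →ₗ[R] C) (h : C →ₗ[R] D)
    (hfg : Function.Exact f g) (hgh : Function.Exact g h)
    (K : Submodule R B)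
    -- `B₂ = B/K` with canonical surjection `π₁ = K.mkQ`,
    -- `C₂ = C/g(K)` with canonical surjection `π₂ = (K.map g).mkQ`.
    -- `g₂ : B/K → C/g(K)` is the map induced by `g`:
    (g₂ : (B ⧸ K) →ₗ[R] C ⧸ Submodule.map g K)
    (hg₂ : g₂ ∘ₗ K.mkQ = (Submodule.map g K).mkQ ∘ₗ g)
    -- `h₂ : C/g(K) → D` is the unique map with `h₂ ∘ π₂ = h`:
    (h₂ : (C ⧸ Submodule.map g K) →ₗ[R] D)
    (hh₂ : h₂ ∘ₗ (Submodule.map g K).mkQ = h) :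
    -- `f₂ = π₁ ∘ f`; the sequence `A → B₂ → C₂ → D` is exact at `B₂` and `C₂`:
    Function.Exact (K.mkQ ∘ₗ f) g₂ ∧ Function.Exact g₂ h₂ := by
  have hK : K.map g ≤ LinearMap.ker h :=
    LinearMap.map_le_range.trans (LinearMap.range_le_ker_iff.2 hgh.linearMap_comp_eq_zero)
  obtain rfl : g₂ = K.mapQ (K.map g) g (K.le_comap_map g) :=
    Submodule.linearMap_qext _ (hg₂.trans (Submodule.mapQ_mkQ _ _ _).symm)
  obtain rfl : h₂ = (K.map g).liftQ h hK :=
    Submodule.linearMap_qext _ (hh₂.trans (Submodule.liftQ_mkQ _ _ _).symm)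
  exact ⟨Submodule.exact_mkQ_comp_mapQ_map hfg K,
    Submodule.exact_mapQ_liftQ hgh K (K.map g) _ hK⟩
end

section
/- Let R be a commutative ring. Let B₁ be a submodule of an R-module B with inclusion i₁ : B₁ → B, and let A →^{f₁} B₁ →^{g₁} C₁ →^{h₁} D be a sequence of R-modules exact at B₁ and at C₁. Let C be the pushout of g₁ : B₁ → C₁ along i₁ : B₁ → B, i.e. C = (C₁ ⊕ B)/N where N = {(g₁(x), −x) : x ∈ B₁}, with structure maps i₂ : C₁ → C, i₂(c₁) = [(c₁, 0)], and g : B → C, g(b) = [(0, b)]. Set f = i₁ ∘ f₁ : A → B, and let h : C → D be the map determined by h ∘ i₂ = h₁ and h ∘ g = 0 (i.e. h([(c₁, b)]) = h₁(c₁), which is well-defined since h₁ ∘ g₁ = 0). Then the sequence A →^f B →^g C →^h D is exact at B and at C. -/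
/-!
Exactness at `B`: `[(0, b)] = 0` means `(0, b) = (g₁ x, -x)` for some `x ∈ ker g₁ = range f₁`.
Exactness at `C`: `h [(c₁, b)] = h₁ c₁`, so if this vanishes then `c₁ = g₁ x`, and since the
pushout square commutes, `[(g₁ x, b)] = [(0, x + b)]` lies in the image of `g`.
-/

section Pushout

variable {R : Type*} [Ring R] {A B C₁ D : Type*}
  [AddCommGroup A] [Module R A] [AddCommGroup B] [Module R B]
  [AddCommGroup C₁] [Module R C₁] [AddCommGroup D] [Module R D]
  {B₁ : Submodule R B} {g₁ : B₁ →ₗ[R] C₁} {N : Submodule R (C₁ × B)}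

theorem mkQ_comp_inl_comp_eq_mkQ_comp_inr_comp_subtype (hN : ∀ x : B₁, (g₁ x, -(x : B)) ∈ N) :
    N.mkQ ∘ₗ LinearMap.inl R C₁ B ∘ₗ g₁ = N.mkQ ∘ₗ LinearMap.inr R C₁ B ∘ₗ B₁.subtype := by
  ext x
  simpa [Submodule.Quotient.eq, sub_eq_add_neg] using hN x

theorem ker_mkQ_comp_inr (hN : ∀ z : C₁ × B, z ∈ N ↔ ∃ x : B₁, z = (g₁ x, -(x : B))) :
    LinearMap.ker (N.mkQ ∘ₗ LinearMap.inr R C₁ B) = (LinearMap.ker g₁).map B₁.subtype := by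
  ext b
  simp only [LinearMap.mem_ker, LinearMap.coe_comp, Function.comp_apply, LinearMap.inr_apply,
    Submodule.mkQ_apply, Submodule.Quotient.mk_eq_zero, hN, Prod.ext_iff, Submodule.mem_map,
    Submodule.subtype_apply]
  constructor
  · rintro ⟨x, hx, rfl⟩
    exact ⟨-x, by rw [map_neg, ← hx, neg_zero], rfl⟩
  · rintro ⟨x, hx, rfl⟩
    exact ⟨-x, by rw [map_neg, hx, neg_zero], by simp⟩

theorem comp_mkQ_eq_comp_fst {h₁ : C₁ →ₗ[R] D} {h : ((C₁ × B) ⧸ N) →ₗ[R] D}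
    (hhi₂ : h ∘ₗ (N.mkQ ∘ₗ LinearMap.inl R C₁ B) = h₁)
    (hhg : h ∘ₗ (N.mkQ ∘ₗ LinearMap.inr R C₁ B) = 0) :
    h ∘ₗ N.mkQ = h₁ ∘ₗ LinearMap.fst R C₁ B := by
  ext c
  · simpa using LinearMap.congr_fun hhi₂ c
  · simpa using LinearMap.congr_fun hhg c

theorem exact_subtype_comp_mkQ_comp_inr {f₁ : A →ₗ[R] B₁}
    (hN : ∀ z : C₁ × B, z ∈ N ↔ ∃ x : B₁, z = (g₁ x, -(x : B)))
    (hf₁g₁ : Function.Exact f₁ g₁) :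
    Function.Exact (B₁.subtype ∘ₗ f₁) (N.mkQ ∘ₗ LinearMap.inr R C₁ B) := by
  rw [LinearMap.exact_iff, ker_mkQ_comp_inr hN, LinearMap.range_comp,
    LinearMap.exact_iff.mp hf₁g₁]

theorem exact_mkQ_comp_inr {h₁ : C₁ →ₗ[R] D} {h : ((C₁ × B) ⧸ N) →ₗ[R] D}
    (hN : ∀ x : B₁, (g₁ x, -(x : B)) ∈ N) (hg₁h₁ : Function.Exact g₁ h₁)
    (hh : h ∘ₗ N.mkQ = h₁ ∘ₗ LinearMap.fst R C₁ B) :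
    Function.Exact (N.mkQ ∘ₗ LinearMap.inr R C₁ B) h := by
  intro c
  constructor
  · obtain ⟨⟨c₁, b⟩, rfl⟩ := N.mkQ_surjective c
    intro hc
    have hc₁ : h₁ c₁ = 0 := by simpa using LinearMap.congr_fun hh (c₁, b) ▸ hc
    obtain ⟨x, rfl⟩ := (hg₁h₁ c₁).mp hc₁
    have hsquare : N.mkQ (g₁ x, 0) = N.mkQ (0, (x : B)) :=
      LinearMap.congr_fun (mkQ_comp_inl_comp_eq_mkQ_comp_inr_comp_subtype hN) x
    refine ⟨x + b, ?_⟩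
    calc N.mkQ (0, x + b) = N.mkQ (0, (x : B)) + N.mkQ (0, b) := by rw [← map_add]; simp
      _ = N.mkQ (g₁ x, 0) + N.mkQ (0, b) := by rw [hsquare]
      _ = N.mkQ (g₁ x, b) := by rw [← map_add]; simp
  · rintro ⟨b, rfl⟩
    simpa using LinearMap.congr_fun hh (0, b)

end Pushout

/-- Proposition 2.2(a) (Lifting of Exactness, pushout case):
given an exact sequence `A → B₁ → C₁ → D` and a submodule inclusion
`i₁ : B₁ ↪ B`, the pushout `C = (C₁ ⊕ B)/N`, `N = {(g₁ x, -x) : x ∈ B₁}`,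
yields an exact sequence `A → B → C → D`. -/
theorem lifting_of_exactness_pushout
    {R : Type*} [CommRing R]
    {A B C₁ D : Type*}
    [AddCommGroup A] [Module R A] [AddCommGroup B] [Module R B]
    [AddCommGroup C₁] [Module R C₁] [AddCommGroup D] [Module R D]
    (B₁ : Submodule R B)
    (f₁ : A →ₗ[R] B₁) (g₁ : B₁ →ₗ[R] C₁) (h₁ : C₁ →ₗ[R] D)
    (hf₁g₁ : Function.Exact f₁ g₁) (hg₁h₁ : Function.Exact g₁ h₁)
    -- the pushout `C = (C₁ × B) ⧸ N`, where `N = {(g₁ x, -x) : x ∈ B₁}`: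
    (N : Submodule R (C₁ × B))
    (hN : ∀ z : C₁ × B, z ∈ N ↔ ∃ x : B₁, z = (g₁ x, -(x : B)))
    -- structure maps `i₂ : C₁ → C`, `c₁ ↦ [(c₁, 0)]` and `g : B → C`, `b ↦ [(0, b)]`
    -- are `N.mkQ ∘ₗ inl` and `N.mkQ ∘ₗ inr`;
    -- `h : C → D` is the map determined by `h ∘ i₂ = h₁` and `h ∘ g = 0`:
    (h : ((C₁ × B) ⧸ N) →ₗ[R] D)
    (hhi₂ : h ∘ₗ (N.mkQ ∘ₗ LinearMap.inl R C₁ B) = h₁)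
    (hhg : h ∘ₗ (N.mkQ ∘ₗ LinearMap.inr R C₁ B) = 0) :
    -- with `f = i₁ ∘ f₁`, the sequence `A → B → C → D` is exact at `B` and at `C`:
    Function.Exact (B₁.subtype ∘ₗ f₁) (N.mkQ ∘ₗ LinearMap.inr R C₁ B) ∧
      Function.Exact (N.mkQ ∘ₗ LinearMap.inr R C₁ B) h :=
  ⟨exact_subtype_comp_mkQ_comp_inr hN hf₁g₁,
    exact_mkQ_comp_inr (fun x => (hN _).mpr ⟨x, rfl⟩) hg₁h₁ (comp_mkQ_eq_comp_fst hhi₂ hhg)⟩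
end

section
/- Let R be a commutative ring. Let π₂ : C → C₂ be a surjective R-linear map of R-modules, and let A →^{f₂} B₂ →^{g₂} C₂ →^{h₂} D be a sequence of R-modules exact at B₂ and at C₂. Let B be the pullback of g₂ : B₂ → C₂ along π₂, i.e. B = {(b₂, c) ∈ B₂ × C : g₂(b₂) = π₂(c)}, with first projection π₁ : B → B₂ and second projection g : B → C. Let f : A → B be given by f(a) = (f₂(a), 0) (well-defined since g₂ ∘ f₂ = 0 by exactness), so π₁ ∘ f = f₂ and g ∘ f = 0, and set h = h₂ ∘ π₂ : C → D. Then the sequence A →^f B →^g C →^h D is exact at B and at C, and moreover π₁ is surjective. -/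
namespace Submodule

variable {R : Type*} [CommRing R] {A B₂ C C₂ D : Type*}
  [AddCommGroup A] [Module R A] [AddCommGroup B₂] [Module R B₂]
  [AddCommGroup C] [Module R C] [AddCommGroup C₂] [Module R C₂]
  [AddCommGroup D] [Module R D]
  {π₂ : C →ₗ[R] C₂} {g₂ : B₂ →ₗ[R] C₂} {P : Submodule R (B₂ × C)}

theorem fst_comp_subtype_surjective_of_pullback (hP : ∀ x : B₂ × C, x ∈ P ↔ g₂ x.1 = π₂ x.2)
    (hπ₂ : Function.Surjective π₂) :
    Function.Surjective (LinearMap.fst R B₂ C ∘ₗ P.subtype) := by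
  intro b₂
  obtain ⟨c, hc⟩ := hπ₂ (g₂ b₂)
  exact ⟨⟨(b₂, c), (hP _).mpr hc.symm⟩, rfl⟩

theorem exact_snd_comp_subtype_of_pullback (hP : ∀ x : B₂ × C, x ∈ P ↔ g₂ x.1 = π₂ x.2)
    {h₂ : C₂ →ₗ[R] D} (hg₂h₂ : Function.Exact g₂ h₂) :
    Function.Exact (LinearMap.snd R B₂ C ∘ₗ P.subtype) (h₂ ∘ₗ π₂) := by
  intro c
  constructor
  · intro hc
    obtain ⟨b₂, hb₂⟩ := (hg₂h₂ (π₂ c)).mp hc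
    exact ⟨⟨(b₂, c), (hP _).mpr hb₂⟩, rfl⟩
  · rintro ⟨b, rfl⟩
    have hb : g₂ (b : B₂ × C).1 = π₂ (b : B₂ × C).2 := (hP b).mp b.2
    change h₂ (π₂ (b : B₂ × C).2) = 0
    rw [← hb]
    exact hg₂h₂.apply_apply_eq_zero _

theorem exact_lift_snd_comp_subtype_of_pullback (hP : ∀ x : B₂ × C, x ∈ P ↔ g₂ x.1 = π₂ x.2)
    {f₂ : A →ₗ[R] B₂} (hf₂g₂ : Function.Exact f₂ g₂) {f : A →ₗ[R] P}
    (hf : ∀ a : A, (f a : B₂ × C) = (f₂ a, 0)) :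
    Function.Exact f (LinearMap.snd R B₂ C ∘ₗ P.subtype) := by
  intro b
  constructor
  · intro hb
    change (b : B₂ × C).2 = 0 at hb
    have hg₂b : g₂ (b : B₂ × C).1 = 0 := by rw [(hP b).mp b.2, hb, map_zero]
    obtain ⟨a, ha⟩ := (hf₂g₂ _).mp hg₂b
    exact ⟨a, Subtype.ext ((hf a).trans (Prod.ext ha hb.symm))⟩
  · rintro ⟨a, rfl⟩
    change (f a : B₂ × C).2 = 0
    rw [hf a]

end Submodule

/-- Proposition 2.2(b) (Lifting of Exactness, pullback case):
given an exact sequence `A → B₂ → C₂ → D` and a surjection `π₂ : C → C₂`,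
the pullback `B = {(b₂, c) : g₂ b₂ = π₂ c}` yields an exact sequence
`A → B → C → D`, and the first projection `π₁ : B → B₂` is surjective. -/
theorem lifting_of_exactness_pullback
    {R : Type*} [CommRing R]
    {A B₂ C C₂ D : Type*}
    [AddCommGroup A] [Module R A] [AddCommGroup B₂] [Module R B₂]
    [AddCommGroup C] [Module R C] [AddCommGroup C₂] [Module R C₂]
    [AddCommGroup D] [Module R D]
    (π₂ : C →ₗ[R] C₂) (hπ₂ : Function.Surjective π₂)
    (f₂ : A →ₗ[R] B₂) (g₂ : B₂ →ₗ[R] C₂) (h₂ : C₂ →ₗ[R] D)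
    (hf₂g₂ : Function.Exact f₂ g₂) (hg₂h₂ : Function.Exact g₂ h₂)
    -- the pullback `B = {(b₂, c) ∈ B₂ × C : g₂ b₂ = π₂ c}`:
    (P : Submodule R (B₂ × C))
    (hP : ∀ x : B₂ × C, x ∈ P ↔ g₂ x.1 = π₂ x.2)
    -- `f : A → B` is given by `f a = (f₂ a, 0)`:
    (f : A →ₗ[R] P)
    (hf : ∀ a : A, (f a : B₂ × C) = (f₂ a, 0)) :
    -- with `π₁ = fst ∘ incl`, `g = snd ∘ incl` and `h = h₂ ∘ π₂`, the sequence
    -- `A → B → C → D` is exact at `B` and at `C`, and `π₁` is surjective: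
    Function.Exact f ((LinearMap.snd R B₂ C) ∘ₗ P.subtype) ∧
      Function.Exact ((LinearMap.snd R B₂ C) ∘ₗ P.subtype) (h₂ ∘ₗ π₂) ∧
      Function.Surjective ((LinearMap.fst R B₂ C) ∘ₗ P.subtype) :=
  ⟨Submodule.exact_lift_snd_comp_subtype_of_pullback hP hf₂g₂ hf,
    Submodule.exact_snd_comp_subtype_of_pullback hP hg₂h₂,
    Submodule.fst_comp_subtype_surjective_of_pullback hP hπ₂⟩
end
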